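/- arXiv:1810.06773 — 3 statements merged into one kernel-verified Lean document; each statement's English description precedes it below -/
import Mathlib

section
/- Let f : α → ℝ be a fitness function and let S be a finite multiset of μ individuals. If T is a multiset of μ individuals obtained from S ∪ O (where O is any finite multiset of offspring) by taking the m smallest fitness values of S ∪ O together with any μ − m other elements of S ∪ O, then the sum of the m smallest fitness values in T is at most the sum of the m smallest fitness values in S. -/
/-- Sum of the `m` smallest fitness values of a multiset of individuals. -/
noncomputable def mSmallestSum {α : Type*} (f : α → ℝ) (m : ℕ) (M : Multiset α) : ℝ :=
  (((M.map f).sort (· ≤ ·)).take m).sum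

/-!
Adding individuals can only lower each order statistic: inserting `x` into a sorted list shifts
the entries behind `x` one place to the right, so the `i`-th smallest value never increases.
Hence the `m` smallest values of `S + O` sum to at most those of `S`, and elitism makes the
`m` smallest values of `T` exactly those of `S + O`.
-/

theorem List.orderedInsert_eq_cons_of_forall {α : Type*} {r : α → α → Prop} [DecidableRel r]
    {a : α} {l : List α} (h : ∀ b ∈ l, r a b) : l.orderedInsert r a = a :: l := by
  cases l with
  | nil => rfl
  | cons b l => exact List.orderedInsert_cons_of_le r l (h b List.mem_cons_self)

theorem Multiset.sort_cons_eq_orderedInsert {α : Type*} [LinearOrder α] (x : α)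
    (M : Multiset α) :
    (x ::ₘ M).sort (· ≤ ·) = (M.sort (· ≤ ·)).orderedInsert (· ≤ ·) x := by
  have hperm : ((x ::ₘ M).sort (· ≤ ·)).Perm ((M.sort (· ≤ ·)).orderedInsert (· ≤ ·) x) := by
    rw [← Multiset.coe_eq_coe, Multiset.sort_eq, Multiset.coe_eq_coe.mpr (List.perm_orderedInsert _ x _),
      ← Multiset.cons_coe, Multiset.sort_eq]
  exact hperm.eq_of_pairwise' (Multiset.pairwise_sort _ _)
    ((Multiset.pairwise_sort M _).orderedInsert x _)

section OrderedMonoid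

variable {β : Type*} [AddCommMonoid β] [LinearOrder β] [IsOrderedAddMonoid β]

theorem List.sum_take_orderedInsert_le (x : β) {l : List β} (hl : l.Pairwise (· ≤ ·))
    {m : ℕ} (hm : m ≤ l.length) :
    ((l.orderedInsert (· ≤ ·) x).take m).sum ≤ (l.take m).sum := by
  induction l generalizing x m with
  | nil => simp_all
  | cons a t ih =>
    obtain ⟨ha, ht⟩ := List.pairwise_cons.mp hl
    cases m with
    | zero => simp
    | succ k =>
      have hk : k ≤ t.length := by simpa using hm
      by_cases hxa : x ≤ a
      · have hat : ((a :: t).take k).sum ≤ (t.take k).sum := by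
          simpa [List.orderedInsert_eq_cons_of_forall ha] using ih a ht hk
        rw [List.orderedInsert_cons_of_le _ _ hxa]
        simpa only [List.take_succ_cons, List.sum_cons] using add_le_add hxa hat
      · rw [List.orderedInsert_of_not_le _ _ hxa]
        simpa only [List.take_succ_cons, List.sum_cons] using add_le_add_right (ih x ht hk) a

theorem Multiset.sum_take_sort_le_of_le {M N : Multiset β} (hMN : M ≤ N) {m : ℕ}
    (hm : m ≤ Multiset.card M) :
    ((N.sort (· ≤ ·)).take m).sum ≤ ((M.sort (· ≤ ·)).take m).sum := by
  obtain ⟨O, rfl⟩ := Multiset.le_iff_exists_add.mp hMN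
  induction O using Multiset.induction with
  | empty => simp
  | cons x O ih =>
    calc (((M + x ::ₘ O).sort (· ≤ ·)).take m).sum
        = ((((M + O).sort (· ≤ ·)).orderedInsert (· ≤ ·) x).take m).sum := by
          rw [Multiset.add_cons, Multiset.sort_cons_eq_orderedInsert]
      _ ≤ (((M + O).sort (· ≤ ·)).take m).sum :=
          List.sum_take_orderedInsert_le x (Multiset.pairwise_sort _ _) (by rw [Multiset.length_sort, Multiset.card_add]; omega)
      _ ≤ ((M.sort (· ≤ ·)).take m).sum := ih (Multiset.le_add_right _ _)

end OrderedMonoid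

theorem mSmallestSum_le_of_le {α : Type*} (f : α → ℝ) {m : ℕ} {S N : Multiset α} (hSN : S ≤ N)
    (hm : m ≤ Multiset.card S) : mSmallestSum f m N ≤ mSmallestSum f m S :=
  Multiset.sum_take_sort_le_of_le (Multiset.map_le_map hSN) (by simpa using hm)

theorem mElitist_selection_nonincreasing_general {α : Type*} (f : α → ℝ) (μ m : ℕ)
    (S O T : Multiset α) (hS : Multiset.card S = μ) (hm : m ≤ μ)
    (hElite : (((T.map f).sort (· ≤ ·)).take m)
              = ((((S + O).map f).sort (· ≤ ·)).take m)) :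
    mSmallestSum f m T ≤ mSmallestSum f m S := by
  calc mSmallestSum f m T = mSmallestSum f m (S + O) := congrArg List.sum hElite
    _ ≤ mSmallestSum f m S := mSmallestSum_le_of_le f (Multiset.le_add_right S O) (hS ▸ hm)

/-- m-elitist selection from parents plus offspring does not increase the sum of the
`m` smallest fitness values. -/
theorem mElitist_selection_nonincreasing {α : Type*} (f : α → ℝ) (μ m : ℕ)
    (S O T : Multiset α) (hS : Multiset.card S = μ) (hm : m ≤ μ)
    (hTsub : T ≤ S + O) (hTcard : Multiset.card T = μ)
    (hElite : (((T.map f).sort (· ≤ ·)).take m)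
              = ((((S + O).map f).sort (· ≤ ·)).take m)) :
    mSmallestSum f m T ≤ mSmallestSum f m S :=
  mElitist_selection_nonincreasing_general f μ m S O T hS hm hElite
end

section
/- Let μ, m be natural numbers with 1 ≤ m ≤ μ. Suppose P : ℕ → Multiset α is a sequence of populations each of cardinality μ, f : α → ℝ a fitness function, and suppose for each k there exist: (a) a multiset P' of cardinality μ with a bijection to P k under which each element's fitness is ≤ its counterpart's fitness in P k (the SGD step with back-off), and (b) an offspring multiset O, such that P (k+1) consists of the m elements of P' ∪ O with the smallest fitness values together with μ − m other elements of P' ∪ O. Then the m-elitist average fitness J_m(P k) := (1/m) · (sum of the m smallest values of f on P k) satisfies J_m(P (k+1)) ≤ J_m(P k) for all k. -/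
/-!
Let `S_m` be the sum of the `m` smallest values of a multiset. Enlarging a multiset can only
lower `S_m`: the sorted list of a sub-multiset is a sublist of the sorted list, and the first `m`
entries of a sorted list are entrywise below those of any of its sublists. Lowering values along
a bijection also lowers `S_m`: the `m` smallest of the old values are matched with `m` new values
of no larger sum. One generation of ESGD is a chain of such steps: the new population contains
the elite `E`, whose `S_m` is that of parents plus offspring, which contain the parents after
back-off, which are matched below the old population.
-/

namespace List

variable {β : Type*} [AddCommMonoid β] [PartialOrder β] [IsOrderedAddMonoid β]

theorem sum_take_le_sum_take_of_sublist {l' l : List β} (h : l' <+ l) (hl : l.Pairwise (· ≤ ·))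
    {m : ℕ} (hm : min m l.length ≤ l'.length) : (l.take m).sum ≤ (l'.take m).sum := by
  induction h generalizing m with
  | slnil => simp
  | @cons l' l a h ih =>
    cases m with
    | zero => simp
    | succ n =>
      have hn : n < l'.length := by
        have := h.length_le
        simp only [length_cons] at hm
        omega
      have ha : a ≤ l'[n] := rel_of_pairwise_cons hl (h.subset (getElem_mem hn))
      calc ((a :: l).take (n + 1)).sum = a + (l.take n).sum := by simp
        _ ≤ l'[n] + (l'.take n).sum := add_le_add ha (ih hl.of_cons (by omega))
        _ = (l'.take (n + 1)).sum := by rw [sum_take_succ _ _ hn, add_comm]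
  | @cons_cons l' l a h ih =>
    cases m with
    | zero => simp
    | succ n =>
      simp only [length_cons] at hm
      simp only [take_succ_cons, sum_cons]
      exact add_le_add_right (ih hl.of_cons (by omega)) a

end List

namespace Multiset

theorem Rel.exists_le_rel {α β : Type*} {r : α → β → Prop} {s : Multiset α} {t u : Multiset β}
    (h : Rel r s t) (hu : u ≤ t) : ∃ u' ≤ s, Rel r u' u := by
  obtain ⟨v, rfl⟩ := le_iff_exists_add.1 hu
  obtain ⟨u', v', hu', -, rfl⟩ := rel_add_right.1 h
  exact ⟨u', le_add_right _ _, hu'⟩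

variable {β : Type*} [LinearOrder β]

theorem sort_sublist_sort_of_le {u s : Multiset β} (h : u ≤ s) :
    (u.sort (· ≤ ·)).Sublist (s.sort (· ≤ ·)) :=
  List.sublist_of_subperm_of_pairwise (by rwa [← coe_le, sort_eq, sort_eq])
    (pairwise_sort _ _) (pairwise_sort _ _)

def smallest (m : ℕ) (s : Multiset β) : Multiset β := ((s.sort (· ≤ ·)).take m : List β)

def sumSmallest [AddCommMonoid β] (m : ℕ) (s : Multiset β) : β := ((s.sort (· ≤ ·)).take m).sum

variable {m : ℕ} {s t u : Multiset β}

theorem smallest_le (m : ℕ) (s : Multiset β) : smallest m s ≤ s := by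
  conv_rhs => rw [← sort_eq s (· ≤ ·)]
  exact coe_le.2 (List.take_sublist _ _).subperm

theorem card_smallest (m : ℕ) (s : Multiset β) : card (smallest m s) = min m (card s) := by
  simp [smallest]

section AddCommMonoid

variable [AddCommMonoid β]

theorem sum_smallest (m : ℕ) (s : Multiset β) : (smallest m s).sum = sumSmallest m s :=
  sum_coe _

theorem sumSmallest_of_card_le (h : card s ≤ m) : sumSmallest m s = s.sum := by
  rw [sumSmallest, List.take_of_length_le (by rwa [length_sort]), ← sum_coe, sort_eq]

theorem sumSmallest_of_sort_eq_take (h : s.sort (· ≤ ·) = (t.sort (· ≤ ·)).take m) :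
    sumSmallest m s = sumSmallest m t := by
  rw [sumSmallest, h, List.take_take, min_self, sumSmallest]

variable [IsOrderedAddMonoid β]

theorem sumSmallest_le_sumSmallest_of_le (h : u ≤ s) (hm : min m (card s) ≤ card u) :
    sumSmallest m s ≤ sumSmallest m u :=
  List.sum_take_le_sum_take_of_sublist (sort_sublist_sort_of_le h) (pairwise_sort _ _)
    (by rwa [length_sort, length_sort])

theorem sumSmallest_le_sumSmallest_of_rel (h : Rel (· ≤ ·) s t) :
    sumSmallest m s ≤ sumSmallest m t := by
  obtain ⟨u, hus, hu⟩ := h.exists_le_rel (smallest_le m t)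
  have hcard : card u = min m (card s) := by
    rw [card_eq_card_of_rel hu, card_smallest, card_eq_card_of_rel h]
  calc sumSmallest m s ≤ sumSmallest m u := sumSmallest_le_sumSmallest_of_le hus hcard.ge
    _ = u.sum := sumSmallest_of_card_le (hcard.trans_le (min_le_left _ _))
    _ ≤ (smallest m t).sum := sum_le_sum_of_rel_le hu
    _ = sumSmallest m t := sum_smallest m t

end AddCommMonoid

end Multiset

open Multiset

/-- The paper's `J_m`. -/
noncomputable def mElitistAvg {α : Type*} (f : α → ℝ) (m : ℕ) (M : Multiset α) : ℝ :=
  (1 / (m : ℝ)) * (((M.map f).sort (· ≤ ·)).take m).sum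

theorem mElitistAvg_le_mElitistAvg {α : Type*} {f : α → ℝ} {m : ℕ} {M N : Multiset α}
    (h : sumSmallest m (M.map f) ≤ sumSmallest m (N.map f)) :
    mElitistAvg f m M ≤ mElitistAvg f m N :=
  mul_le_mul_of_nonneg_left h (by positivity)

theorem esgd_mElitist_nonincreasing_general {α : Type*} [DecidableEq α] (f : α → ℝ) (μ m : ℕ)
    (hmμ : m ≤ μ)
    (P : ℕ → Multiset α)
    (hstep : ∀ k, ∃ P' O : Multiset α,
      Multiset.card P' = μ ∧
      Multiset.Rel (fun a b => f a ≤ f b) P' (P k) ∧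
      ∃ E R : Multiset α,
        P (k + 1) = E + R ∧
        E ≤ P' + O ∧
        Multiset.card E = m ∧
        (E.map f).sort (· ≤ ·) = (((P' + O).map f).sort (· ≤ ·)).take m ∧
        R ≤ (P' + O) - E ∧
        Multiset.card R = μ - m) :
    ∀ k, mElitistAvg f m (P (k + 1)) ≤ mElitistAvg f m (P k) := by
  intro k
  obtain ⟨P', O, hP'card, hbackoff, E, R, hnext, -, hEcard, helite, -, -⟩ := hstep k
  apply mElitistAvg_le_mElitistAvg
  calc sumSmallest m ((P (k + 1)).map f) ≤ sumSmallest m (E.map f) :=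
        sumSmallest_le_sumSmallest_of_le (by rw [hnext, map_add]; exact le_add_right _ _)
          (by simp [hEcard])
    _ = sumSmallest m ((P' + O).map f) := sumSmallest_of_sort_eq_take helite
    _ ≤ sumSmallest m (P'.map f) :=
        sumSmallest_le_sumSmallest_of_le (map_le_map (le_add_right _ _)) (by simp [hP'card, hmμ])
    _ ≤ sumSmallest m ((P k).map f) := sumSmallest_le_sumSmallest_of_rel (rel_map.2 hbackoff)

/-- Theorem 1 of the ESGD paper: with a back-off SGD step (each individual's fitness
does not increase, expressed by a fitness-dominating bijection `Multiset.Rel`) and an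
m-elitist evolution step (the `m` best of parents-plus-offspring are always kept and
the remaining `μ - m` slots are filled from the same pool), the m-elitist average
fitness is non-increasing across generations. -/
theorem esgd_mElitist_nonincreasing {α : Type*} [DecidableEq α] (f : α → ℝ) (μ m : ℕ)
    (hm1 : 1 ≤ m) (hmμ : m ≤ μ)
    (P : ℕ → Multiset α) (hcard : ∀ k, Multiset.card (P k) = μ)
    (hstep : ∀ k, ∃ P' O : Multiset α,
      Multiset.card P' = μ ∧
      Multiset.Rel (fun a b => f a ≤ f b) P' (P k) ∧
      ∃ E R : Multiset α,
        P (k + 1) = E + R ∧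
        E ≤ P' + O ∧
        Multiset.card E = m ∧
        (E.map f).sort (· ≤ ·) = (((P' + O).map f).sort (· ≤ ·)).take m ∧
        R ≤ (P' + O) - E ∧
        Multiset.card R = μ - m) :
    ∀ k, mElitistAvg f m (P (k + 1)) ≤ mElitistAvg f m (P k) :=
  esgd_mElitist_nonincreasing_general f μ m hmμ P hstep
end

section
/- Let M and M' be multisets of real numbers of the same cardinality μ, and suppose there is a bijection between them under which each element of M' is less than or equal to the corresponding element of M (pointwise domination). Then for every m ≤ μ, the sum of the m smallest elements of M' is at most the sum of the m smallest elements of M. -/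
/-!
Sorting turns pointwise domination into domination of the order statistics: the minimum `a` of
`M'` is at most the minimum `b` of `M` (since `a` is at most the partner of `b`), and after
removing `a` and `b` the remaining elements are still related by a bijection — if `a` was paired
with `c` and `b` with `d`, pair `d` with `c` instead, as `d ≤ b ≤ c`. Summing the first `m`
order statistics gives the claim.
-/

open List

namespace Multiset

variable {α : Type*} [LinearOrder α]

theorem le_of_rel_le_cons_cons {a b : α} {s t : Multiset α}
    (h : Rel (· ≤ ·) (a ::ₘ s) (b ::ₘ t)) (ha : ∀ x ∈ s, a ≤ x) : a ≤ b := by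
  obtain ⟨d, s', hdb, -, hs⟩ := rel_cons_right.mp h
  have hd : d ∈ a ::ₘ s := hs ▸ mem_cons_self d s'
  rcases mem_cons.mp hd with rfl | hd
  · exact hdb
  · exact (ha d hd).trans hdb

theorem rel_le_of_rel_le_cons_cons {a b : α} {s t : Multiset α}
    (h : Rel (· ≤ ·) (a ::ₘ s) (b ::ₘ t)) (hb : ∀ y ∈ t, b ≤ y) : Rel (· ≤ ·) s t := by
  obtain ⟨c, t', -, hst', ht'⟩ := rel_cons_left.mp h
  rcases cons_eq_cons.mp ht' with ⟨-, rfl⟩ | ⟨-, u, rfl, rfl⟩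
  · exact hst'
  · obtain ⟨d, s', hdb, hs'u, rfl⟩ := rel_cons_right.mp hst'
    exact hs'u.cons (hdb.trans (hb c (mem_cons_self c u)))

theorem exists_eq_cons_forall_le {s : Multiset α} (hs : s ≠ 0) :
    ∃ a s', s = a ::ₘ s' ∧ ∀ x ∈ s', a ≤ x := by
  obtain ⟨a, ha, hmin⟩ := exists_min_image id hs
  exact ⟨a, s.erase a, (cons_erase ha).symm, fun x hx => hmin x (mem_of_mem_erase hx)⟩

theorem forall₂_sort_of_rel_le {s t : Multiset α} (h : Rel (· ≤ ·) s t) :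
    Forall₂ (· ≤ ·) (s.sort (· ≤ ·)) (t.sort (· ≤ ·)) := by
  induction hn : card t generalizing s t with
  | zero =>
    obtain rfl := card_eq_zero.mp hn
    obtain rfl := rel_zero_right.mp h
    simp
  | succ n ih =>
    have hs : card s = n + 1 := (card_eq_card_of_rel h).trans hn
    obtain ⟨a, s, rfl, ha⟩ := exists_eq_cons_forall_le (s := s) (card_pos.mp (by omega))
    obtain ⟨b, t, rfl, hb⟩ := exists_eq_cons_forall_le (s := t) (card_pos.mp (by omega))
    rw [sort_cons _ _ _ ha, sort_cons _ _ _ hb]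
    exact .cons (le_of_rel_le_cons_cons h ha)
      (ih (rel_le_of_rel_le_cons_cons h hb) (by simpa using hn))

end Multiset

theorem mSmallest_sum_mono_of_rel_general (μ : ℕ) (M M' : Multiset ℝ)
    (hrel : Multiset.Rel (fun a b => a ≤ b) M' M) :
    ∀ m ≤ μ, (((M'.sort (· ≤ ·)).take m).sum) ≤ (((M.sort (· ≤ ·)).take m).sum) :=
  fun m _ => (forall₂_take m (Multiset.forall₂_sort_of_rel_le hrel)).sum_le_sum

/-- Pointwise domination (via a bijection between two multisets of reals of the same
cardinality) implies domination of the sum of the `m` smallest elements. -/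
theorem mSmallest_sum_mono_of_rel (μ : ℕ) (M M' : Multiset ℝ)
    (hM : Multiset.card M = μ) (hM' : Multiset.card M' = μ)
    (hrel : Multiset.Rel (fun a b => a ≤ b) M' M) :
    ∀ m ≤ μ, (((M'.sort (· ≤ ·)).take m).sum) ≤ (((M.sort (· ≤ ·)).take m).sum) :=
  mSmallest_sum_mono_of_rel_general μ M M' hrel
end
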